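/- Let (X,d) be a metric space with a bornology 𝔅. If X satisfies α₄(Γ_{𝔅^s},Γ_{𝔅^s}), then X satisfies S₁(Γ_{𝔅^s},Γ_{𝔅^s}). -/

import Mathlib

open Set Metric

variable {X : Type*} [MetricSpace X]

/-- The δ-enlargement of a set `B`: union of open δ-balls around points of `B`. -/
def enl (B : Set X) (δ : ℝ) : Set X := ⋃ b ∈ B, Metric.ball b δ

/-- A bornology (in the sense of Hu/Hogbe-Nlend): a family of nonempty subsets
covering `X`, closed under finite unions and hereditary. -/
def IsBorn (𝔅 : Set (Set X)) : Prop :=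
  (∀ B ∈ 𝔅, B.Nonempty) ∧ (⋃₀ 𝔅 = Set.univ) ∧
  (∀ B₁ ∈ 𝔅, ∀ B₂ ∈ 𝔅, B₁ ∪ B₂ ∈ 𝔅) ∧
  (∀ B ∈ 𝔅, ∀ A : Set X, A ⊆ B → A.Nonempty → A ∈ 𝔅)

/-- The bornology has a base consisting of closed sets. -/
def HasClosedBase (𝔅 : Set (Set X)) : Prop :=
  ∃ 𝔅₀ ⊆ 𝔅, (∀ B ∈ 𝔅₀, IsClosed B) ∧ ∀ B ∈ 𝔅, ∃ B₀ ∈ 𝔅₀, B ⊆ B₀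

/-- A strong 𝔅-cover (𝔅ˢ-cover): an open cover 𝒰 of X with X ∉ 𝒰 such that for
every `B ∈ 𝔅` some δ-enlargement of `B` lies in a member of 𝒰. -/
def IsBsCover (𝔅 : Set (Set X)) (𝒰 : Set (Set X)) : Prop :=
  (∀ U ∈ 𝒰, IsOpen U) ∧ Set.univ ∉ 𝒰 ∧ ⋃₀ 𝒰 = Set.univ ∧
  ∀ B ∈ 𝔅, ∃ U ∈ 𝒰, ∃ δ > 0, enl B δ ⊆ U

/-- A γ_{𝔅ˢ}-cover: an infinite countable open cover `(U n)` such that for every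
`B ∈ 𝔅` there are `n₀` and positive reals `δ n` (for `n ≥ n₀`) with
`enl B (δ n) ⊆ U n` for all `n ≥ n₀`. -/
def IsGammaCover (𝔅 : Set (Set X)) (U : ℕ → Set X) : Prop :=
  (∀ n, IsOpen (U n)) ∧ (⋃ n, U n) = Set.univ ∧ (Set.range U).Infinite ∧
  ∀ B ∈ 𝔅, ∃ n₀ : ℕ, ∃ δ : ℕ → ℝ, ∀ n ≥ n₀, 0 < δ n ∧ enl B (δ n) ⊆ U n

/-- `g` belongs to the basic τˢ_𝔅-neighborhood `[B,ε]ˢ(f)`. -/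
def SNbhd (B : Set X) (ε : ℝ) (f g : C(X, ℝ)) : Prop :=
  ∃ δ > 0, ∀ x ∈ enl B δ, |g x - f x| < ε

/-- `f` lies in the τˢ_𝔅-closure of `A`. -/
def SCl (𝔅 : Set (Set X)) (A : Set C(X, ℝ)) (f : C(X, ℝ)) : Prop :=
  ∀ B ∈ 𝔅, ∀ ε > 0, ∃ g ∈ A, SNbhd B ε f g

/-- The sequence `g` τˢ_𝔅-converges to `f`. -/
def SConv (𝔅 : Set (Set X)) (g : ℕ → C(X, ℝ)) (f : C(X, ℝ)) : Prop :=
  ∀ B ∈ 𝔅, ∀ ε > 0, ∃ N : ℕ, ∀ n ≥ N, SNbhd B ε f (g n)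

/-- S₁(Γ_{𝔅ˢ},Γ_{𝔅ˢ}). -/
def S1Gamma (𝔅 : Set (Set X)) : Prop :=
  ∀ U : ℕ → ℕ → Set X, (∀ n, IsGammaCover 𝔅 (U n)) →
    ∃ f : ℕ → ℕ, IsGammaCover 𝔅 (fun n => U n (f n))

/-- α₂(Γ_{𝔅ˢ},Γ_{𝔅ˢ}). -/
def Alpha2Gamma (𝔅 : Set (Set X)) : Prop :=
  ∀ U : ℕ → ℕ → Set X, (∀ n, IsGammaCover 𝔅 (U n)) →
    ∃ V : ℕ → Set X, IsGammaCover 𝔅 V ∧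
      ∀ n, (Set.range V ∩ Set.range (U n)).Infinite

/-- α₃(Γ_{𝔅ˢ},Γ_{𝔅ˢ}). -/
def Alpha3Gamma (𝔅 : Set (Set X)) : Prop :=
  ∀ U : ℕ → ℕ → Set X, (∀ n, IsGammaCover 𝔅 (U n)) →
    ∃ V : ℕ → Set X, IsGammaCover 𝔅 V ∧
      {n | (Set.range V ∩ Set.range (U n)).Infinite}.Infinite

/-- α₄(Γ_{𝔅ˢ},Γ_{𝔅ˢ}). -/
def Alpha4Gamma (𝔅 : Set (Set X)) : Prop :=
  ∀ U : ℕ → ℕ → Set X, (∀ n, IsGammaCover 𝔅 (U n)) →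
    ∃ V : ℕ → Set X, IsGammaCover 𝔅 V ∧
      {n | (Set.range V ∩ Set.range (U n)).Nonempty}.Infinite

/-!
Intersecting the first `n` covers coordinatewise gives covers `W n` whose members lie in the
members of all earlier covers. If some `W n₀` has infinitely many members that recur in
infinitely many of the `W n`, such members already yield a selector for every `n`. Otherwise every
`W n` has infinitely many members occurring in only finitely many rows; α₄ applied to these
subcovers gives a γ-cover `V` meeting infinitely many of them, and as each member of `V` meets
only finitely many rows, late members of `V` lie in late rows, which again yields a selector.
-/

open Filter

def enlFilter (B : Set X) : Filter X := ⨅ δ > 0, 𝓟 (enl B δ)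

lemma enl_mono {B : Set X} {δ δ' : ℝ} (h : δ ≤ δ') : enl B δ ⊆ enl B δ' :=
  iUnion₂_mono fun _ _ => ball_subset_ball h

lemma mem_enlFilter {B S : Set X} : S ∈ enlFilter B ↔ ∃ δ > 0, enl B δ ⊆ S := by
  refine (mem_biInf_of_directed (s := Ioi 0) ?_ ⟨1, one_pos⟩).trans
    (by simp only [mem_principal]; rfl)
  intro δ₁ h₁ δ₂ h₂
  exact ⟨min δ₁ δ₂, mem_Ioi.2 (lt_min h₁ h₂), principal_mono.2 (enl_mono (min_le_left _ _)),
    principal_mono.2 (enl_mono (min_le_right _ _))⟩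

lemma mem_of_mem_enlFilter {B S : Set X} {x : X} (hx : x ∈ B) (hS : S ∈ enlFilter B) : x ∈ S := by
  obtain ⟨δ, hδ, hsub⟩ := mem_enlFilter.1 hS
  exact hsub (mem_biUnion hx (mem_ball_self hδ))

/-- The tail condition in the definition of a γ_{𝔅ˢ}-cover. -/
def EventuallyAbsorbs (𝔅 : Set (Set X)) (C : ℕ → Set X) : Prop :=
  ∀ B ∈ 𝔅, ∀ᶠ n in atTop, C n ∈ enlFilter B

section EventuallyAbsorbs

variable {𝔅 : Set (Set X)}

lemma EventuallyAbsorbs.mono {C D : ℕ → Set X} (h : EventuallyAbsorbs 𝔅 C)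
    (hCD : ∀ n, C n ⊆ D n) : EventuallyAbsorbs 𝔅 D :=
  fun B hB => (h B hB).mono fun n hn => mem_of_superset hn (hCD n)

lemma EventuallyAbsorbs.comp {C : ℕ → Set X} (h : EventuallyAbsorbs 𝔅 C) {e : ℕ → ℕ}
    (he : Tendsto e atTop atTop) : EventuallyAbsorbs 𝔅 (C ∘ e) :=
  fun B hB => he.eventually (h B hB)

lemma EventuallyAbsorbs.biInter_Iic {U : ℕ → ℕ → Set X} (h : ∀ i, EventuallyAbsorbs 𝔅 (U i))
    (n : ℕ) : EventuallyAbsorbs 𝔅 fun m => ⋂ i ∈ Iic n, U i m :=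
  fun B hB => ((eventually_all_finite (finite_Iic n)).2 fun i _ => h i B hB).mono
    fun _ hm => (biInter_mem (finite_Iic n)).2 hm

lemma EventuallyAbsorbs.eventually_mem (hsing : ∀ x : X, {x} ∈ 𝔅) {C : ℕ → Set X}
    (h : EventuallyAbsorbs 𝔅 C) (x : X) : ∀ᶠ n in atTop, x ∈ C n :=
  (h {x} (hsing x)).mono fun _ hn => mem_of_mem_enlFilter (mem_singleton x) hn

lemma IsGammaCover.eventuallyAbsorbs {U : ℕ → Set X} (hU : IsGammaCover 𝔅 U) :
    EventuallyAbsorbs 𝔅 U := by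
  intro B hB
  obtain ⟨n₀, δ, H⟩ := hU.2.2.2 B hB
  exact eventually_atTop.2 ⟨n₀, fun n hn => mem_enlFilter.2 ⟨δ n, H n hn⟩⟩

lemma isGammaCover_of_eventuallyAbsorbs (hsing : ∀ x : X, {x} ∈ 𝔅) {C : ℕ → Set X}
    (hopen : ∀ n, IsOpen (C n)) (hne : ∀ n, C n ≠ univ) (h : EventuallyAbsorbs 𝔅 C) :
    IsGammaCover 𝔅 C := by
  refine ⟨hopen, eq_univ_of_forall fun x => mem_iUnion.2 (h.eventually_mem hsing x).exists,
    fun hfin => infinite_univ (α := ℕ) ?_, fun B hB => ?_⟩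
  · -- a member `A ≠ univ` cannot recur infinitely often, since every point is eventually in `C n`
    rw [← preimage_range C]
    refine hfin.preimage' ?_
    rintro _ ⟨n, rfl⟩
    obtain ⟨x, hx⟩ := (ne_univ_iff_exists_notMem _).1 (hne n)
    by_contra hinf
    obtain ⟨m, hm, hxm⟩ :=
      ((Nat.frequently_atTop_iff_infinite.2 hinf).and_eventually (h.eventually_mem hsing x)).exists
    exact hx (hm ▸ hxm)
  · obtain ⟨n₀, hn₀⟩ := eventually_atTop.1 (h B hB)
    have hδ : ∀ n, ∃ δ : ℝ, n₀ ≤ n → 0 < δ ∧ enl B δ ⊆ C n := fun n =>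
      if hn : n₀ ≤ n then (mem_enlFilter.1 (hn₀ n hn)).imp fun _ hδ _ => hδ
      else ⟨1, fun h => absurd h hn⟩
    choose δ hδ using hδ
    exact ⟨n₀, δ, hδ⟩

end EventuallyAbsorbs

lemma IsGammaCover.exists_tendsto_ne_univ {𝔅 : Set (Set X)} {U : ℕ → Set X}
    (hU : IsGammaCover 𝔅 U) : ∃ φ : ℕ → ℕ, Tendsto φ atTop atTop ∧ ∀ m, U (φ m) ≠ univ := by
  have hinf : {m | U m ≠ univ}.Infinite := by
    refine Infinite.of_image U ((hU.2.2.1.sdiff (finite_singleton univ)).mono ?_)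
    rintro _ ⟨⟨m, rfl⟩, hm⟩
    exact ⟨m, hm, rfl⟩
  exact ⟨Nat.nth _, (Nat.nth_strictMono hinf).tendsto_atTop, Nat.nth_mem_of_infinite hinf⟩

lemma IsBorn.singleton_mem {Y : Type*} {𝔅 : Set (Set Y)} (h : IsBorn 𝔅) (x : Y) : {x} ∈ 𝔅 := by
  obtain ⟨B, hB, hxB⟩ := mem_sUnion.1 (h.2.1.symm ▸ mem_univ x)
  exact h.2.2.2 B hB {x} (singleton_subset_iff.2 hxB) (singleton_nonempty x)

lemma exists_late_mem_of_finite_rows {α : Type*} {V : ℕ → α} {R : ℕ → ℕ → α}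
    (hmeet : {n | (range V ∩ range (R n)).Nonempty}.Infinite)
    (hfin : ∀ j, {n | V j ∈ range (R n)}.Finite) (k : ℕ) :
    ∃ j ≥ k, ∃ n ≥ k, V j ∈ range (R n) := by
  have hearly : ((⋃ j ∈ Iio k, {n | V j ∈ range (R n)}) ∪ Iio k).Finite :=
    ((finite_Iio k).biUnion fun j _ => hfin j).union (finite_Iio k)
  obtain ⟨n, ⟨_, ⟨j, rfl⟩, hjn⟩, hn⟩ := (hmeet.sdiff hearly).nonempty
  simp only [mem_union, mem_iUnion, mem_Iio, not_or, not_exists, not_lt] at hn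
  exact ⟨j, not_lt.1 fun hj => hn.1 j hj hjn, n, hn.2, hjn⟩

section Rows

variable {𝔅 : Set (Set X)} {W : ℕ → ℕ → Set X}

lemma exists_absorbing_diagonal_of_recurrent {n₀ : ℕ} (hW : EventuallyAbsorbs 𝔅 (W n₀))
    (hrec : {m | {n | W n₀ m ∈ range (W n)}.Infinite}.Infinite) :
    ∃ A : ℕ → Set X, EventuallyAbsorbs 𝔅 A ∧ ∀ k, ∃ n ≥ k, A k ∈ range (W n) := by
  refine ⟨W n₀ ∘ Nat.nth _, hW.comp (Nat.nth_strictMono hrec).tendsto_atTop, fun k => ?_⟩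
  obtain ⟨n, hn, hkn⟩ := (Nat.nth_mem_of_infinite hrec k).exists_gt k
  exact ⟨n, hkn.le, hn⟩

lemma exists_absorbing_diagonal_of_transient (hsing : ∀ x : X, {x} ∈ 𝔅) (hα : Alpha4Gamma 𝔅)
    (hopen : ∀ n m, IsOpen (W n m)) (hne : ∀ n m, W n m ≠ univ)
    (hW : ∀ n, EventuallyAbsorbs 𝔅 (W n))
    (htr : ∀ n, {m | {n' | W n m ∈ range (W n')}.Finite}.Infinite) :
    ∃ A : ℕ → Set X, EventuallyAbsorbs 𝔅 A ∧ ∀ k, ∃ n ≥ k, A k ∈ range (W n) := by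
  set e : ℕ → ℕ → ℕ := fun n => Nat.nth _
  have hR : ∀ n, IsGammaCover 𝔅 (W n ∘ e n) := fun n =>
    isGammaCover_of_eventuallyAbsorbs hsing (fun _ => hopen n _) (fun _ => hne n _)
      ((hW n).comp (Nat.nth_strictMono (htr n)).tendsto_atTop)
  obtain ⟨V, hV, hmeet⟩ := hα _ hR
  have hfin : ∀ j, {n | V j ∈ range (W n ∘ e n)}.Finite := by
    intro j
    rcases eq_empty_or_nonempty {n | V j ∈ range (W n ∘ e n)} with h | ⟨n₁, m, hm⟩
    · exact h ▸ finite_empty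
    · rw [← hm]
      refine (Nat.nth_mem_of_infinite (htr n₁) m).subset ?_
      rintro n ⟨r, hr⟩
      exact ⟨e n r, hr⟩
  choose j hj n hn hjn using exists_late_mem_of_finite_rows hmeet hfin
  refine ⟨V ∘ j, hV.eventuallyAbsorbs.comp (tendsto_atTop_mono hj tendsto_id),
    fun k => ⟨n k, hn k, ?_⟩⟩
  obtain ⟨r, hr⟩ := hjn k
  exact ⟨e (n k) r, hr⟩

lemma exists_absorbing_diagonal (hsing : ∀ x : X, {x} ∈ 𝔅) (hα : Alpha4Gamma 𝔅)
    (hopen : ∀ n m, IsOpen (W n m)) (hne : ∀ n m, W n m ≠ univ)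
    (hW : ∀ n, EventuallyAbsorbs 𝔅 (W n)) :
    ∃ A : ℕ → Set X, EventuallyAbsorbs 𝔅 A ∧ ∀ k, ∃ n ≥ k, A k ∈ range (W n) := by
  by_cases htr : ∀ n, {m | {n' | W n m ∈ range (W n')}.Finite}.Infinite
  · exact exists_absorbing_diagonal_of_transient hsing hα hopen hne hW htr
  · obtain ⟨n₀, hn₀⟩ := not_forall.1 htr
    exact exists_absorbing_diagonal_of_recurrent (hW n₀) (not_infinite.1 hn₀).infinite_compl

end Rows

theorem statement9 (𝔅 : Set (Set X)) (h𝔅 : IsBorn 𝔅) (h : Alpha4Gamma 𝔅) :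
    S1Gamma 𝔅 := by
  have hsing := h𝔅.singleton_mem
  intro U hU
  choose φ hφ hφne using fun n => (hU n).exists_tendsto_ne_univ
  set W : ℕ → ℕ → Set X := fun n m => ⋂ i ∈ Iic n, U i (φ i m)
  have hWsub : ∀ {k n} m, k ≤ n → W n m ⊆ U k (φ k m) := fun m hkn =>
    biInter_subset_of_mem (mem_Iic.2 hkn)
  have hWabs : ∀ n, EventuallyAbsorbs 𝔅 (W n) :=
    EventuallyAbsorbs.biInter_Iic fun i => (hU i).eventuallyAbsorbs.comp (hφ i)
  have hWopen : ∀ n m, IsOpen (W n m) := fun n _ =>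
    (finite_Iic n).isOpen_biInter fun i _ => (hU i).1 _
  have hWne : ∀ n m, W n m ≠ univ := fun n m hW =>
    hφne 0 m (eq_univ_of_univ_subset (hW ▸ hWsub m n.zero_le))
  obtain ⟨A, hA, hArow⟩ := exists_absorbing_diagonal hsing h hWopen hWne hWabs
  choose n hn r hr using hArow
  refine ⟨fun k => φ k (r k), isGammaCover_of_eventuallyAbsorbs hsing (fun k => (hU k).1 _)
    (fun k => hφne k _) (hA.mono fun k => ?_)⟩
  exact hr k ▸ hWsub (r k) (hn k)
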